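/- Let 0 < D_min ≤ D_max, let μ*, μ ∈ [0,1] with Δ' := (D_min/D_max)·μ* − μ > 0, and let t ≥ 2, n ∈ ℕ with n ≥ 1. Suppose d, d* ∈ [D_min, D_max] and d·(μ + 2√(2 log t / n)) ≥ d*·μ*. Then n ≤ 8 log t / Δ'². -/

import Mathlib

/-! The selection inequality, divided by `d`, gives `(d*/d) μ* ≤ μ + 2√(2 log t / n)`, and
`d*/d ≥ D_min/D_max`, so `Δ' ≤ 2√(2 log t / n)`; squaring this yields the bound on `n`. -/

open Real

theorem mul_le_of_le_div_of_mul_le {r m d d' x : ℝ} (hd : 0 < d) (hm : 0 ≤ m)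
    (hr : r ≤ d' / d) (h : d' * m ≤ d * x) : r * m ≤ x :=
  calc r * m ≤ d' / d * m := mul_le_mul_of_nonneg_right hr hm
    _ = d' * m / d := div_mul_eq_mul_div d' d m
    _ ≤ x := (div_le_iff₀' hd).mpr h

theorem le_mul_sq_div_of_le_mul_sqrt {Δ c x y : ℝ} (hΔ : 0 < Δ) (hc : 0 ≤ c) (hx : 0 ≤ x)
    (h : Δ ≤ c * √(y / x)) : x ≤ c ^ 2 * y / Δ ^ 2 := by
  have hyx : 0 < y / x := sqrt_pos.mp (pos_of_mul_pos_right (hΔ.trans_le h) hc)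
  have hx : 0 < x := hx.lt_of_ne (by rintro rfl; simp at hyx)
  have hsq : Δ ^ 2 ≤ c ^ 2 * y / x :=
    calc Δ ^ 2 ≤ (c * √(y / x)) ^ 2 := pow_le_pow_left₀ hΔ.le h 2
      _ = c ^ 2 * y / x := by rw [mul_pow, sq_sqrt hyx.le, mul_div_assoc]
  rw [le_div_iff₀ (by positivity)]
  rw [le_div_iff₀ hx] at hsq
  linarith

theorem suboptimal_pull_count_bound_general
    (Dmin Dmax : ℝ) (hDmin : 0 < Dmin)
    (μstar μ : ℝ) (hμstar : μstar ∈ Set.Icc (0 : ℝ) 1)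
    (hgap : 0 < Dmin / Dmax * μstar - μ)
    (t : ℝ) (n : ℕ)
    (d dstar : ℝ) (hd : d ∈ Set.Icc Dmin Dmax) (hdstar : dstar ∈ Set.Icc Dmin Dmax)
    (hsel : d * (μ + 2 * Real.sqrt (2 * Real.log t / n)) ≥ dstar * μstar) :
    (n : ℝ) ≤ 8 * Real.log t / (Dmin / Dmax * μstar - μ) ^ 2 := by
  have hd₀ : 0 < d := hDmin.trans_le hd.1
  have hratio : Dmin / Dmax ≤ dstar / d :=
    div_le_div₀ (hDmin.le.trans hdstar.1) hdstar.1 hd₀ hd.2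
  have hconf : Dmin / Dmax * μstar - μ ≤ 2 * √(2 * log t / n) := by
    linarith [mul_le_of_le_div_of_mul_le hd₀ hμstar.1 hratio hsel]
  have hbound := le_mul_sq_div_of_le_mul_sqrt hgap zero_le_two n.cast_nonneg hconf
  convert hbound using 2
  ring

theorem suboptimal_pull_count_bound
    (Dmin Dmax : ℝ) (hDmin : 0 < Dmin) (hDD : Dmin ≤ Dmax)
    (μstar μ : ℝ) (hμstar : μstar ∈ Set.Icc (0 : ℝ) 1) (hμ : μ ∈ Set.Icc (0 : ℝ) 1)
    (hgap : 0 < Dmin / Dmax * μstar - μ)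
    (t : ℝ) (ht : 2 ≤ t) (n : ℕ) (hn : 1 ≤ n)
    (d dstar : ℝ) (hd : d ∈ Set.Icc Dmin Dmax) (hdstar : dstar ∈ Set.Icc Dmin Dmax)
    (hsel : d * (μ + 2 * Real.sqrt (2 * Real.log t / n)) ≥ dstar * μstar) :
    (n : ℝ) ≤ 8 * Real.log t / (Dmin / Dmax * μstar - μ) ^ 2 :=
  suboptimal_pull_count_bound_general Dmin Dmax hDmin μstar μ hμstar hgap t n d dstar hd hdstar hsel
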